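/- arXiv:1311.5668 — 2 statements merged into one kernel-verified Lean document; each statement's English description precedes it below -/
import Mathlib

section
/- Let δ be an ordinal and X : δ → Diff a δ-sequence of inclusions of diffeological spaces. Then colim X carries the weak diffeology with respect to the images of the X_α: a parameterization P : U → colim X is a plot if and only if each point of U has a neighborhood on which P factors locally through some X_α via a plot of X_α. -/
open Set

universe u v w

/-- A diffeology on a type `X`: a family of distinguished parameterizations ("plots")
defined on open subsets of Euclidean spaces, containing all constant parameterizations,
local, and closed under precomposition with smooth maps. -/
structure Diffeology' (X : Type u) : Type (u + 1) where
  IsPlot : {n : ℕ} → Set (Fin n → ℝ) → ((Fin n → ℝ) → X) → Prop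
  isPlot_const : ∀ {n : ℕ} (U : Set (Fin n → ℝ)) (x : X), IsOpen U →
    IsPlot U fun _ => x
  isPlot_locality : ∀ {n : ℕ} (U : Set (Fin n → ℝ)) (P : (Fin n → ℝ) → X), IsOpen U →
    (∀ u ∈ U, ∃ W, IsOpen W ∧ u ∈ W ∧ W ⊆ U ∧ IsPlot W P) → IsPlot U P
  isPlot_comp : ∀ {n m : ℕ} (U : Set (Fin n → ℝ)) (P : (Fin n → ℝ) → X)
    (V : Set (Fin m → ℝ)) (Q : (Fin m → ℝ) → (Fin n → ℝ)),
    IsPlot U P → IsOpen U → IsOpen V → ContDiffOn ℝ (⊤ : ℕ∞) Q V → MapsTo Q V U →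
    IsPlot V (P ∘ Q)

variable {X : Type u} {Y : Type v} {Z : Type w}

/-- A map between diffeological spaces is smooth if it takes plots to plots. -/
def DSmooth (dX : Diffeology' X) (dY : Diffeology' Y) (f : X → Y) : Prop :=
  ∀ {n : ℕ} (U : Set (Fin n → ℝ)) (P : (Fin n → ℝ) → X),
    IsOpen U → dX.IsPlot U P → dY.IsPlot U (f ∘ P)

/-- An induction: an injective smooth map such that `X` carries the pullback diffeology. -/
def IsInduction (dX : Diffeology' X) (dY : Diffeology' Y) (f : X → Y) : Prop :=
  Function.Injective f ∧
    ∀ {n : ℕ} (U : Set (Fin n → ℝ)) (P : (Fin n → ℝ) → X), IsOpen U →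
      (dX.IsPlot U P ↔ dY.IsPlot U (f ∘ P))

/-- `Q` lifts locally along `f` through plots of `X`. -/
def LiftsLocally (dX : Diffeology' X) (f : X → Y) {n : ℕ}
    (U : Set (Fin n → ℝ)) (Q : (Fin n → ℝ) → Y) : Prop :=
  ∀ u ∈ U, ∃ W, IsOpen W ∧ u ∈ W ∧ W ⊆ U ∧
    ∃ P : (Fin n → ℝ) → X, dX.IsPlot W P ∧ ∀ w ∈ W, f (P w) = Q w

/-- A subduction: a surjective smooth map such that `Y` carries the pushforward
diffeology, i.e. every plot of `Y` locally lifts along `f` through plots of `X`. -/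
def IsSubduction (dX : Diffeology' X) (dY : Diffeology' Y) (f : X → Y) : Prop :=
  Function.Surjective f ∧ DSmooth dX dY f ∧
    ∀ {n : ℕ} (U : Set (Fin n → ℝ)) (Q : (Fin n → ℝ) → Y), IsOpen U →
      dY.IsPlot U Q → LiftsLocally dX f U Q

/-- The data of a `δ`-sequence of inclusions of diffeological spaces together with its
colimit: an ordinal `δ`, a monotone continuous family of subspaces `S α` of the colimit
`C`, each an induction into `C`, exhausting `C`, such that `C` carries the colimit
diffeology, i.e. the natural map from the sum `∐_{α<δ} X_α` is a subduction. -/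
structure DeltaSequence (C : Type) : Type 2 where
  /-- the length of the sequence -/
  δ : Ordinal.{0}
  /-- the underlying subsets of the stages -/
  S : Ordinal.{0} → Set C
  /-- the diffeology of each stage -/
  dS : ∀ α : Ordinal.{0}, Diffeology' (S α)
  /-- the diffeology of the colimit -/
  dC : Diffeology' C
  /-- the sequence consists of inclusions -/
  mono : ∀ α β : Ordinal.{0}, α ≤ β → β < δ → S α ⊆ S β
  /-- the sequence is a colimit-preserving functor: at limit stages it is the union of
  the earlier stages -/
  limit_continuous : ∀ β : Ordinal.{0}, β < δ → Order.IsSuccLimit β →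
    S β = ⋃ (α : Ordinal.{0}) (_ : α < β), S α
  /-- the stages exhaust the colimit -/
  cover : (⋃ (α : Ordinal.{0}) (_ : α < δ), S α) = univ
  /-- each stage is a subspace (induction) of the colimit -/
  ind : ∀ α : Ordinal.{0}, α < δ → IsInduction (dS α) dC Subtype.val
  /-- the sum diffeology on `∐_{α<δ} X_α`: plots are the parameterizations which
  locally factor through a plot of a single summand -/
  dSum : Diffeology' ((α : {a : Ordinal.{0} // a < δ}) × S α.1)
  sum_char : ∀ {n : ℕ} (U : Set (Fin n → ℝ))
      (P : (Fin n → ℝ) → (α : {a : Ordinal.{0} // a < δ}) × S α.1), IsOpen U →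
    (dSum.IsPlot U P ↔ ∀ u ∈ U, ∃ W, IsOpen W ∧ u ∈ W ∧ W ⊆ U ∧
      ∃ (α : Ordinal.{0}) (hα : α < δ) (Q : (Fin n → ℝ) → S α),
        (dS α).IsPlot W Q ∧ ∀ w ∈ W, P w = ⟨⟨α, hα⟩, Q w⟩)
  /-- `C` carries the colimit diffeology: the natural map from the sum is a subduction -/
  colim : IsSubduction dSum dC fun x => (x.2 : C)

/-- the colimit of a `δ`-sequence of inclusions of diffeological spaces
carries the weak diffeology with respect to the images of the stages: a
parameterization is a plot of `colim X` iff around every point of its domain it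
factors through some stage `X_α` via a plot of `X_α`. -/
theorem colimit_has_weak_diffeology
    {C : Type} (seq : DeltaSequence C)
    {n : ℕ} (U : Set (Fin n → ℝ)) (P : (Fin n → ℝ) → C) (hU : IsOpen U) :
    seq.dC.IsPlot U P ↔
      ∀ u ∈ U, ∃ W, IsOpen W ∧ u ∈ W ∧ W ⊆ U ∧
        ∃ (α : Ordinal.{0}) (_ : α < seq.δ) (Q : (Fin n → ℝ) → seq.S α),
          (seq.dS α).IsPlot W Q ∧ ∀ w ∈ W, P w = (Q w : C) := by
  constructor
  · intro hP u hu
    obtain ⟨W, hWo, huW, hWU, P', hP', hlift⟩ := seq.colim.2.2 U P hU hP u hu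
    obtain ⟨W', hW'o, huW', hW'W, α, hα, Q, hQ, hfac⟩ :=
      (seq.sum_char W P' hWo).mp hP' u huW
    exact ⟨W', hW'o, huW', hW'W.trans hWU, α, hα, Q, hQ,
      fun w hw => by rw [← hlift w (hW'W hw), hfac w hw]⟩
  · intro h
    apply seq.dC.isPlot_locality U P hU
    intro u hu
    obtain ⟨W, hWo, huW, hWU, α, hα, Q, hQ, hfac⟩ := h u hu
    refine ⟨W, hWo, huW, hWU, ?_⟩
    have hsec : ∀ x : C, ∃ β : Ordinal.{0}, ∃ _ : β < seq.δ, x ∈ seq.S β := by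
      intro x
      have hx : x ∈ (⋃ (β : Ordinal.{0}) (_ : β < seq.δ), seq.S β) :=
        seq.cover ▸ mem_univ x
      simpa using hx
    choose β hβ hmem using hsec
    classical
    set P'' : (Fin n → ℝ) → (γ : {a : Ordinal.{0} // a < seq.δ}) × seq.S γ.1 :=
      fun w => if hw : P w ∈ seq.S α then ⟨⟨α, hα⟩, ⟨P w, hw⟩⟩
               else ⟨⟨β (P w), hβ (P w)⟩, ⟨P w, hmem (P w)⟩⟩ with hP''
    have hfP'' : ((fun x : (γ : {a : Ordinal.{0} // a < seq.δ}) × seq.S γ.1 =>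
        (x.2 : C)) ∘ P'') = P := by
      funext w
      rw [Function.comp_apply, hP'']
      dsimp only
      by_cases hw : P w ∈ seq.S α
      · rw [dif_pos hw]
      · rw [dif_neg hw]
    have hplot : seq.dSum.IsPlot W P'' := by
      rw [seq.sum_char W P'' hWo]
      intro u' hu'
      refine ⟨W, hWo, hu', Subset.rfl, α, hα, Q, hQ, fun w hw => ?_⟩
      have h1 : P w ∈ seq.S α := by rw [hfac w hw]; exact (Q w).2
      rw [hP'']
      dsimp only
      rw [dif_pos h1]
      exact congrArg (Sigma.mk (⟨α, hα⟩ : {a : Ordinal.{0} // a < seq.δ}))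
        (Subtype.ext (hfac w hw))
    have hres := seq.colim.2.1 W P'' hWo hplot
    rwa [hfP''] at hres
end

section
/- The diffeological hemispheres D^n and their unions S̃^n are finite relative to inclusions: for any δ-sequence of inclusions X : δ → Diff with δ a limit ordinal, every smooth map f : D^n → colim X has image contained in some X_α, and hence factors through some stage. -/
open Set

universe u v w

variable {X : Type u} {Y : Type v} {Z : Type w}

theorem DSmooth.const {X : Type u} {Y : Type v} {dX : Diffeology' X} {dY : Diffeology' Y}
    (y : Y) : DSmooth dX dY fun _ => y :=
  fun U _ hU _ => dY.isPlot_const U y hU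

/-- The standard diffeology on a normed space: plots are the smooth parameterizations. -/
noncomputable def stdDiffeology (E : Type) [NormedAddCommGroup E] [NormedSpace ℝ E] :
    Diffeology' E where
  IsPlot {n} U P := IsOpen U → ContDiffOn ℝ (⊤ : ℕ∞) P U
  isPlot_const _ _ _ _ := contDiffOn_const
  isPlot_locality U P hU h _ := by
    intro u hu
    obtain ⟨W, hWo, huW, _, hPW⟩ := h u hu
    exact ((hPW hWo u huW).contDiffAt (hWo.mem_nhds huW)).contDiffWithinAt
  isPlot_comp U P V Q hP hU hV hQ hmap _ := (hP hU).comp hQ hmap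

/-- `γ t = 0` for `t ≤ 0` and `exp (-1/t)` for `t > 0`. -/
noncomputable def gammaFn (t : ℝ) : ℝ := if t ≤ 0 then 0 else Real.exp (-1 / t)

/-- The smooth step function `λ t = γ t / (γ t + γ (1 - t))`. -/
noncomputable def smoothStep (t : ℝ) : ℝ := gammaFn t / (gammaFn t + gammaFn (1 - t))

/-- The smooth step `λ` viewed as a (surjective) map `ℝ → [0,1]`. -/
noncomputable def stepIcc (t : ℝ) : Icc (0 : ℝ) 1 :=
  Set.projIcc 0 1 zero_le_one (smoothStep t)

/-- `0` as a point of `[0,1]`. -/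
def I0 : Icc (0 : ℝ) 1 := ⟨0, by constructor <;> norm_num⟩

/-- `1` as a point of `[0,1]`. -/
def I1 : Icc (0 : ℝ) 1 := ⟨1, by constructor <;> norm_num⟩

/-- `dP` is the product diffeology of `dA` and `dB`. -/
def IsProductDiffeology {A B : Type} (dA : Diffeology' A) (dB : Diffeology' B)
    (dP : Diffeology' (A × B)) : Prop :=
  ∀ {n : ℕ} (U : Set (Fin n → ℝ)) (P : (Fin n → ℝ) → A × B), IsOpen U →
    (dP.IsPlot U P ↔ dA.IsPlot U (Prod.fst ∘ P) ∧ dB.IsPlot U (Prod.snd ∘ P))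

/-- `F` is a smooth homotopy from `f₀` to `f₁`, with parameter space `Ĩ = [0,1]`
(whose diffeology enters through the given diffeology `dXT` on `X × Ĩ`). -/
def IsHomotopy {X Y : Type} (dXT : Diffeology' (X × Icc (0 : ℝ) 1)) (dY : Diffeology' Y)
    (f₀ f₁ : X → Y) (F : X × Icc (0 : ℝ) 1 → Y) : Prop :=
  DSmooth dXT dY F ∧ (∀ x, F (x, I0) = f₀ x) ∧ ∀ x, F (x, I1) = f₁ x

/-- The gluing map `q_n : ℝ^{n+1} × ℝ → ℝ^{n+2}`,
`q_n (v, t) = (v₁, …, vₙ, v_{n+1} cos πt, v_{n+1} sin πt)` (ambient version). -/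
noncomputable def qmap (n : ℕ) (v : EuclideanSpace ℝ (Fin (n + 1))) (t : ℝ) :
    EuclideanSpace ℝ (Fin (n + 2)) := WithLp.toLp 2 fun i =>
  if h : (i : ℕ) < n then v ⟨i, by omega⟩
  else if (i : ℕ) = n then v (Fin.last n) * Real.cos (Real.pi * t)
  else v (Fin.last n) * Real.sin (Real.pi * t)

/-- The generating parameterization `Q_n ∘ λⁿ : ℝⁿ → D^n ⊆ ℝ^{n+1}` (ambient version),
defined inductively via `q`. -/
noncomputable def hemiMap : (n : ℕ) → (Fin n → ℝ) → EuclideanSpace ℝ (Fin (n + 1))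
  | 0, _ => WithLp.toLp 2 fun _ => 1
  | n + 1, x => qmap n (hemiMap n (x ∘ Fin.castSucc)) (smoothStep (x (Fin.last n)))

/-- The upper hemisphere `D^n = {v ∈ ℝ^{n+1} : ‖v‖ = 1, v_{n+1} ≥ 0}`. -/
def upperHemi (n : ℕ) : Set (EuclideanSpace ℝ (Fin (n + 1))) :=
  {v | ‖v‖ = 1 ∧ 0 ≤ v (Fin.last n)}

/-- The equator `S̃^{n-1} ⊆ D^n`, i.e. the points with vanishing last coordinate. -/
def equator (n : ℕ) : Set (upperHemi n) :=
  {v | (v : EuclideanSpace ℝ (Fin (n + 1))) (Fin.last n) = 0}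

/-- The lower face `D⁻^{n-1} ⊆ S̃^{n-1} ⊆ D^n`: points of the equator whose `n`-th
coordinate is non-positive (meaningful for `n ≥ 1`). -/
def lowerFace (n : ℕ) : Set (upperHemi n) :=
  {v | (v : EuclideanSpace ℝ (Fin (n + 1))) (Fin.last n) = 0 ∧
    (v : EuclideanSpace ℝ (Fin (n + 1))) ⟨n - 1, by omega⟩ ≤ 0}

/-- The data of the diffeological hemispheres: each `D^n` carries the quotient
diffeology along the generating parameterization `Q_n ∘ λⁿ : ℝⁿ → D^n`, together
with the map `Q_n : Ĩⁿ → D^n` and the upper/lower inclusions `D^n → D^{n+1}`. -/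
structure HemiData : Type 1 where
  /-- the diffeology of `D^n` -/
  dD : ∀ n : ℕ, Diffeology' (upperHemi n)
  /-- the generating parameterization `Q_n ∘ λⁿ : ℝⁿ → D^n` -/
  Q : ∀ n : ℕ, (Fin n → ℝ) → upperHemi n
  hQ : ∀ (n : ℕ) (x : Fin n → ℝ),
    (Q n x : EuclideanSpace ℝ (Fin (n + 1))) = hemiMap n x
  /-- `D^n` carries the quotient (pushforward) diffeology along `Q_n ∘ λⁿ` -/
  subd : ∀ n : ℕ, IsSubduction (stdDiffeology (Fin n → ℝ)) (dD n) (Q n)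
  /-- the map `Q_n : Ĩⁿ → D^n` -/
  QI : ∀ n : ℕ, ((Fin n → Icc (0 : ℝ) 1) → upperHemi n)
  hQI : ∀ (n : ℕ) (x : Fin n → ℝ), QI n (fun i => stepIcc (x i)) = Q n x
  /-- the inclusion `D^n → D^{n+1}`, `v ↦ (v, 0)` -/
  incl : ∀ n : ℕ, upperHemi n → upperHemi (n + 1)
  hincl : ∀ (n : ℕ) (v : upperHemi n),
    (∀ i : Fin (n + 1), (incl n v : EuclideanSpace ℝ (Fin (n + 2))) (Fin.castSucc i) =
      (v : EuclideanSpace ℝ (Fin (n + 1))) i) ∧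
    (incl n v : EuclideanSpace ℝ (Fin (n + 2))) (Fin.last (n + 1)) = 0
  /-- the lower inclusion `D^n ≅ D⁻^n ⊆ D^{n+1}`, `v ↦ (v₁, …, vₙ, -v_{n+1}, 0)` -/
  incl' : ∀ n : ℕ, upperHemi n → upperHemi (n + 1)
  hincl' : ∀ (n : ℕ) (v : upperHemi n),
    (∀ i : Fin (n + 1), (incl' n v : EuclideanSpace ℝ (Fin (n + 2))) (Fin.castSucc i) =
      (if i = Fin.last n then -(v : EuclideanSpace ℝ (Fin (n + 1))) i
        else (v : EuclideanSpace ℝ (Fin (n + 1))) i)) ∧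
    (incl' n v : EuclideanSpace ℝ (Fin (n + 2))) (Fin.last (n + 1)) = 0

/-- The sphere `S̃^n = D^n ∪ D⁻^n = {v ∈ ℝ^{n+1+1} : ‖v‖ = 1}`. -/
def sphereSet (n : ℕ) : Set (EuclideanSpace ℝ (Fin (n + 1))) := {v | ‖v‖ = 1}


lemma gammaFn_eq : gammaFn = expNegInvGlue := by
  funext t
  simp only [gammaFn, expNegInvGlue, neg_div, one_div]

lemma smoothStep_eq : smoothStep = Real.smoothTransition := by
  funext t
  simp only [smoothStep, Real.smoothTransition, gammaFn_eq]

lemma stepIcc_surj (y : Icc (0 : ℝ) 1) : ∃ t ∈ Icc (0 : ℝ) 1, stepIcc t = y := by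
  have hc : ContinuousOn smoothStep (Icc (0 : ℝ) 1) := by
    rw [smoothStep_eq]; exact Real.smoothTransition.continuous.continuousOn
  have hy : (y : ℝ) ∈ Icc (smoothStep 0) (smoothStep 1) := by
    rw [smoothStep_eq]
    simp only [Real.smoothTransition.zero, Real.smoothTransition.one]
    exact y.2
  obtain ⟨t, ht, hts⟩ := intermediate_value_Icc (by norm_num : (0:ℝ) ≤ 1) hc hy
  refine ⟨t, ht, ?_⟩
  rw [stepIcc, hts, Set.projIcc_of_mem _ y.2]


/-- the hemispheres `D^n` (and their unions `S̃^n`) are finite relative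
to inclusions: every smooth map from `D^n` (resp. `S̃^n`) into the colimit of a
`δ`-sequence of inclusions, `δ` a limit ordinal, has image contained in some stage
`X_α`, and hence factors through that stage. -/
theorem hemisphere_finite_relative_to_inclusions
    (hd : HemiData) {C : Type} (seq : DeltaSequence C) (hδ : Order.IsSuccLimit seq.δ) (n : ℕ)
    -- the diffeology of the sphere `S̃^n`: plots locally factor through one of
    -- the two hemispheres, included via `j⁺` (identity) and `j⁻` (reflection)
    (dSph : Diffeology' (sphereSet n))
    (jp jm : upperHemi n → sphereSet n)
    (hjp : ∀ v : upperHemi n, (jp v : EuclideanSpace ℝ (Fin (n + 1))) = (v : EuclideanSpace ℝ (Fin (n + 1))))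
    (hjm : ∀ (v : upperHemi n) (i : Fin (n + 1)),
      (jm v : EuclideanSpace ℝ (Fin (n + 1))) i =
        (if i = Fin.last n then -(v : EuclideanSpace ℝ (Fin (n + 1))) i
          else (v : EuclideanSpace ℝ (Fin (n + 1))) i))
    (hSph : ∀ {m : ℕ} (U : Set (Fin m → ℝ)) (P : (Fin m → ℝ) → sphereSet n), IsOpen U →
      (dSph.IsPlot U P ↔ ∀ u ∈ U, ∃ W, IsOpen W ∧ u ∈ W ∧ W ⊆ U ∧
        ∃ Q : (Fin m → ℝ) → upperHemi n, (hd.dD n).IsPlot W Q ∧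
          ((∀ w ∈ W, P w = jp (Q w)) ∨ ∀ w ∈ W, P w = jm (Q w)))) :
    (∀ f : upperHemi n → C, DSmooth (hd.dD n) seq.dC f →
      ∃ α : Ordinal.{0}, α < seq.δ ∧ ∀ v, f v ∈ seq.S α) ∧
    ∀ g : sphereSet n → C, DSmooth dSph seq.dC g →
      ∃ α : Ordinal.{0}, α < seq.δ ∧ ∀ v, g v ∈ seq.S α := by
  -- Part 1: maps from the hemisphere
  have main : ∀ f : upperHemi n → C, DSmooth (hd.dD n) seq.dC f →
      ∃ α : Ordinal.{0}, α < seq.δ ∧ ∀ v, f v ∈ seq.S α := by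
    intro f hf
    -- `f ∘ Q n` is a plot of `C` on all of `ℝⁿ`
    have hQplot : (hd.dD n).IsPlot (univ : Set (Fin n → ℝ)) (hd.Q n ∘ id) :=
      (hd.subd n).2.1 univ id isOpen_univ (fun _ => contDiffOn_id)
    have hplot : seq.dC.IsPlot univ (f ∘ (hd.Q n ∘ id)) := hf univ _ isOpen_univ hQplot
    -- locally `f ∘ Q n` lands in a single stage
    have loc : ∀ u : Fin n → ℝ, ∃ W, IsOpen W ∧ u ∈ W ∧
        ∃ α : Ordinal.{0}, α < seq.δ ∧ ∀ w ∈ W, f (hd.Q n w) ∈ seq.S α := by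
      intro u
      obtain ⟨W, hWo, huW, _, P, hP, hPf⟩ :=
        seq.colim.2.2 univ _ isOpen_univ hplot u (mem_univ u)
      obtain ⟨W', hW'o, huW', hW'W, α, hα, Q', _, hfac⟩ :=
        (seq.sum_char W P hWo).1 hP u huW
      refine ⟨W', hW'o, huW', α, hα, fun w hw => ?_⟩
      have h1 : ((P w).2 : C) = f (hd.Q n w) := hPf w (hW'W hw)
      rw [hfac w hw] at h1
      exact h1 ▸ (Q' w).2
    choose W hWo hmem α hαδ hWα using loc
    have hKc : IsCompact (Set.Icc (0 : Fin n → ℝ) 1) := isCompact_Icc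
    obtain ⟨t, -, hcov⟩ := hKc.elim_nhds_subcover W (fun x _ => (hWo x).mem_nhds (hmem x))
    have hsup : t.sup α < seq.δ := by
      refine (Finset.sup_lt_iff ?_).2 fun b _ => hαδ b
      rw [Ordinal.bot_eq_zero]; exact hδ.pos
    refine ⟨t.sup α, hsup, fun v => ?_⟩
    -- every point of the hemisphere is `Q n x` for some `x` in the unit cube
    obtain ⟨x₀, hx₀⟩ := (hd.subd n).1 v
    choose x hx1 hx2 using fun i => stepIcc_surj (stepIcc (x₀ i))
    have hxv : hd.Q n x = v := by
      rw [← hx₀, ← hd.hQI n x, ← hd.hQI n x₀]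
      congr 1
      exact funext hx2
    have hxK : x ∈ Set.Icc (0 : Fin n → ℝ) 1 :=
      Set.mem_Icc.2 ⟨fun i => (hx1 i).1, fun i => (hx1 i).2⟩
    have hxU := hcov hxK
    simp only [mem_iUnion] at hxU
    obtain ⟨u, hu, hxu⟩ := hxU
    have hmemS : f v ∈ seq.S (α u) := hxv ▸ hWα u x hxu
    exact seq.mono (α u) (t.sup α) (Finset.le_sup hu) hsup hmemS
  refine ⟨main, ?_⟩
  -- Part 2: maps from the sphere
  intro g hg
  have hjpsm : DSmooth (hd.dD n) dSph jp := by
    intro m U P hU hP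
    rw [hSph U _ hU]
    intro u hu
    exact ⟨U, hU, hu, subset_rfl, P, hP, Or.inl fun w _ => rfl⟩
  have hjmsm : DSmooth (hd.dD n) dSph jm := by
    intro m U P hU hP
    rw [hSph U _ hU]
    intro u hu
    exact ⟨U, hU, hu, subset_rfl, P, hP, Or.inr fun w _ => rfl⟩
  obtain ⟨α₁, hα₁, h1⟩ := main (g ∘ jp) fun U P hU hP => hg U _ hU (hjpsm U P hU hP)
  obtain ⟨α₂, hα₂, h2⟩ := main (g ∘ jm) fun U P hU hP => hg U _ hU (hjmsm U P hU hP)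
  have hmax : max α₁ α₂ < seq.δ := max_lt hα₁ hα₂
  refine ⟨max α₁ α₂, hmax, fun v => ?_⟩
  by_cases hlast : 0 ≤ (v : EuclideanSpace ℝ (Fin (n + 1))) (Fin.last n)
  · have hv : (v : EuclideanSpace ℝ (Fin (n + 1))) ∈ upperHemi n := ⟨v.2, hlast⟩
    have hjv : jp ⟨(v : EuclideanSpace ℝ (Fin (n + 1))), hv⟩ = v := Subtype.ext (hjp _)
    have := h1 ⟨(v : EuclideanSpace ℝ (Fin (n + 1))), hv⟩
    rw [Function.comp_apply, hjv] at this
    exact seq.mono α₁ (max α₁ α₂) (le_max_left _ _) hmax this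
  · set w : EuclideanSpace ℝ (Fin (n + 1)) := WithLp.toLp 2 fun i =>
      if i = Fin.last n then -(v : EuclideanSpace ℝ (Fin (n + 1))) i
      else (v : EuclideanSpace ℝ (Fin (n + 1))) i with hw
    have hwap : ∀ i, w i = if i = Fin.last n then -(v : EuclideanSpace ℝ (Fin (n + 1))) i
        else (v : EuclideanSpace ℝ (Fin (n + 1))) i := fun _ => rfl
    have hwnorm : ‖w‖ = 1 := by
      rw [EuclideanSpace.norm_eq, ← v.2, EuclideanSpace.norm_eq]
      congr 1
      refine Finset.sum_congr rfl fun i _ => ?_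
      by_cases hi : i = Fin.last n <;> simp [hwap, hi]
    have hwmem : w ∈ upperHemi n := by
      refine ⟨hwnorm, ?_⟩
      have hwl : w (Fin.last n) = -(v : EuclideanSpace ℝ (Fin (n + 1))) (Fin.last n) := by
        simp [hwap]
      rw [hwl]
      linarith [not_le.1 hlast]
    have hjw : jm ⟨w, hwmem⟩ = v := by
      refine Subtype.ext (PiLp.ext fun i => ?_)
      rw [hjm ⟨w, hwmem⟩ i]
      by_cases hi : i = Fin.last n <;> simp [hwap, hi]
    have := h2 ⟨w, hwmem⟩
    rw [Function.comp_apply, hjw] at this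
    exact seq.mono α₂ (max α₁ α₂) (le_max_right _ _) hmax this
end
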